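/- arXiv:2301.04433 — 2 statements merged into one kernel-verified Lean document; each statement's English description precedes it below -/
import Mathlib

section
/- Let $X$ be a Banach space and $r \in (0,1]$. The following are equivalent: (1) every convex combination of slices of $B_X$ has diameter at least $2r$; (2) $\sup\{\|x\| : x \in C\} \geq r$ for every convex combination of slices $C$ of $B_X$; (3) $\sup\{\|x\| : x \in D\} \geq r$ for every symmetric convex combination of slices $D$ of $B_X$. -/
open Metric Set Pointwise Filter Topology

variable {X : Type*} [NormedAddCommGroup X] [NormedSpace ℝ X]

def sliceSet (f : X →L[ℝ] ℝ) (δ : ℝ) : Set X :=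
  {y ∈ closedBall (0 : X) 1 | 1 - δ < f y}

def IsSlice (S : Set X) : Prop :=
  ∃ (f : X →L[ℝ] ℝ) (δ : ℝ), ‖f‖ = 1 ∧ 0 < δ ∧ S = sliceSet f δ

def IsCCS (C : Set X) : Prop :=
  ∃ (n : ℕ) (l : Fin n → ℝ) (S : Fin n → Set X),
    (∀ i, 0 < l i) ∧ (∑ i, l i) = 1 ∧ (∀ i, IsSlice (S i)) ∧
    C = ∑ i, l i • S i

def RelWeakOpen (V : Set X) : Prop :=
  ∃ U : Set X, IsOpen (show Set (WeakSpace ℝ X) from U) ∧ V = U ∩ closedBall 0 1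

def weakClosure (A : Set X) : Set X :=
  @closure (WeakSpace ℝ X) _ A

def SuperDeltaPoint (x : X) : Prop :=
  ∀ V : Set X, RelWeakOpen V → x ∈ V → ∀ ε > 0, ∃ y ∈ V, 2 - ε < ‖x - y‖

def SuperDaugavetPoint (x : X) : Prop :=
  ∀ V : Set X, RelWeakOpen V → V.Nonempty → ∀ ε > 0, ∃ y ∈ V, 2 - ε < ‖x - y‖

def CcsDeltaPoint (x : X) : Prop :=
  ∀ C : Set X, IsCCS C → x ∈ C → ∀ ε > 0, ∃ y ∈ C, 2 - ε < ‖x - y‖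

def CcsDaugavetPoint (x : X) : Prop :=
  ∀ C : Set X, IsCCS C → ∀ ε > 0, ∃ y ∈ C, 2 - ε < ‖x - y‖

lemma isSlice_neg {S : Set X} (h : IsSlice S) : IsSlice (-S) := by
  obtain ⟨f, δ, hf, hδ, rfl⟩ := h
  refine ⟨-f, δ, by simpa using hf, hδ, ?_⟩
  ext y
  simp [sliceSet, Set.mem_neg, mem_closedBall_zero_iff]

lemma isSlice_subset {S : Set X} (h : IsSlice S) : S ⊆ closedBall (0 : X) 1 := by
  obtain ⟨f, δ, hf, hδ, rfl⟩ := h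
  exact fun y hy => hy.1

lemma isCCS_subset {C : Set X} (h : IsCCS C) : C ⊆ closedBall (0 : X) 1 := by
  obtain ⟨n, l, S, hl, hsum, hS, rfl⟩ := h
  intro x hx
  rw [Set.mem_fintype_sum] at hx
  obtain ⟨g, hg, hgx⟩ := hx
  rw [mem_closedBall_zero_iff, ← hgx]
  calc ‖∑ i, g i‖ ≤ ∑ i, ‖g i‖ := norm_sum_le _ _
    _ ≤ ∑ i, l i := by
        refine Finset.sum_le_sum fun i _ => ?_
        obtain ⟨s, hs, hgs⟩ := hg i
        have hs1 : ‖s‖ ≤ 1 := mem_closedBall_zero_iff.1 (isSlice_subset (hS i) hs)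
        have hgs' : l i • s = g i := hgs
        rw [← hgs', norm_smul, Real.norm_eq_abs, abs_of_pos (hl i)]
        nlinarith [hl i]
    _ = 1 := hsum

lemma neg_set_eq {A : Set X} : -A = (-1 : ℝ) • A := by
  rw [Set.neg_smul_set, one_smul]

lemma isCCS_sym {C : Set X} (h : IsCCS C) :
    ∃ D : Set X, IsCCS D ∧ D = -D ∧ D = (2⁻¹ : ℝ) • C + (2⁻¹ : ℝ) • (-C) := by
  obtain ⟨n, l, S, hl, hsum, hS, rfl⟩ := h
  set C := ∑ i, l i • S i with hC
  set l' : Fin (n + n) → ℝ := Fin.addCases (fun i => l i / 2) (fun i => l i / 2) with hl'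
  set S' : Fin (n + n) → Set X := Fin.addCases S (fun i => -(S i)) with hS'
  have key : ∑ i, l' i • S' i = (2⁻¹ : ℝ) • C + (2⁻¹ : ℝ) • (-C) := by
    rw [Fin.sum_univ_add]
    simp only [hl', hS', Fin.addCases_left, Fin.addCases_right]
    congr 1
    · rw [Finset.smul_sum]
      exact Finset.sum_congr rfl fun i _ => by rw [smul_smul]; congr 1; ring
    · rw [hC, neg_set_eq, Finset.smul_sum, Finset.smul_sum]
      refine Finset.sum_congr rfl fun i _ => ?_
      rw [neg_set_eq (A := S i)]
      simp only [smul_smul]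
      congr 1; ring
  refine ⟨∑ i, l' i • S' i, ⟨n + n, l', S', ?_, ?_, ?_, rfl⟩, ?_, key⟩
  · intro i
    refine Fin.addCases (fun j => ?_) (fun j => ?_) i <;>
      simp only [hl', Fin.addCases_left, Fin.addCases_right] <;>
      exact div_pos (hl j) two_pos
  · rw [Fin.sum_univ_add]
    simp only [hl', Fin.addCases_left, Fin.addCases_right]
    rw [← Finset.sum_add_distrib]
    rw [← hsum]
    exact Finset.sum_congr rfl fun i _ => by ring
  · intro i
    refine Fin.addCases (fun j => ?_) (fun j => ?_) i <;>
      simp only [hS', Fin.addCases_left, Fin.addCases_right]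
    · exact hS j
    · exact isSlice_neg (hS j)
  · rw [key]
    have hnegadd : ∀ A B : Set X, -(A + B) = -A + -B := fun A B => by
      rw [neg_set_eq, smul_add, ← neg_set_eq, ← neg_set_eq]
    rw [hnegadd, ← Set.smul_set_neg, ← Set.smul_set_neg, neg_neg, add_comm]

theorem scaled_sd2p_characterization {X : Type*} [NormedAddCommGroup X]
    [NormedSpace ℝ X] [CompleteSpace X] (r : ℝ) (hr : r ∈ Set.Ioc (0 : ℝ) 1) :
    ((∀ C : Set X, IsCCS C → 2 * r ≤ Metric.diam C) ↔
      (∀ C : Set X, IsCCS C → ∀ ε > 0, ∃ y ∈ C, r - ε < ‖y‖)) ∧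
    ((∀ C : Set X, IsCCS C → ∀ ε > 0, ∃ y ∈ C, r - ε < ‖y‖) ↔
      (∀ D : Set X, IsCCS D → D = -D → ∀ ε > 0, ∃ y ∈ D, r - ε < ‖y‖)) := by
  obtain ⟨hr0, hr1⟩ := hr
  have decomp : ∀ {C : Set X} (hC : IsCCS C) {y : X},
      y ∈ (2⁻¹ : ℝ) • C + (2⁻¹ : ℝ) • (-C) →
      ∃ a ∈ C, ∃ b ∈ C, ‖a - b‖ = 2 * ‖y‖ := by
    intro C hC y hy
    obtain ⟨u, hu, v, hv, huv⟩ := Set.mem_add.1 hy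
    obtain ⟨a, ha, rfl⟩ := hu
    obtain ⟨c, hc, rfl⟩ := hv
    rw [Set.mem_neg] at hc
    refine ⟨a, ha, -c, hc, ?_⟩
    have huv' : (2⁻¹ : ℝ) • a + (2⁻¹ : ℝ) • c = y := huv
    rw [← huv', ← smul_add, norm_smul, Real.norm_eq_abs,
      abs_of_pos (by norm_num : (0:ℝ) < (2⁻¹ : ℝ))]
    simp only [sub_neg_eq_add]
    ring
  constructor
  · constructor
    · intro h C hC ε hε
      by_contra hcon
      push_neg at hcon
      have hd := h C hC
      rcases C.eq_empty_or_nonempty with rfl | ⟨y₀, hy₀⟩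
      · rw [Metric.diam_empty] at hd; linarith
      · have h0 : (0 : ℝ) ≤ r - ε := le_trans (norm_nonneg y₀) (hcon y₀ hy₀)
        have hdle : Metric.diam C ≤ 2 * (r - ε) := by
          refine Metric.diam_le_of_forall_dist_le (by linarith) fun x hx y hy => ?_
          have := hcon x hx
          have := hcon y hy
          calc dist x y = ‖x - y‖ := dist_eq_norm x y
            _ ≤ ‖x‖ + ‖y‖ := norm_sub_le x y
            _ ≤ 2 * (r - ε) := by linarith
        linarith
    · intro h C hC
      obtain ⟨D, hD, _, hDeq⟩ := isCCS_sym hC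
      refine le_of_forall_pos_le_add fun ε hε => ?_
      obtain ⟨y, hy, hyn⟩ := h D hD (ε / 2) (by linarith)
      rw [hDeq] at hy
      obtain ⟨a, ha, b, hb, hab⟩ := decomp hC hy
      have hbnd : Bornology.IsBounded C :=
        (Metric.isBounded_closedBall (x := (0:X)) (r := 1)).subset (isCCS_subset hC)
      have hdist : dist a b ≤ Metric.diam C := Metric.dist_le_diam_of_mem hbnd ha hb
      rw [dist_eq_norm] at hdist
      linarith
  · constructor
    · intro h D hD _ ε hε
      exact h D hD ε hε
    · intro h C hC ε hε
      obtain ⟨D, hD, hsym, hDeq⟩ := isCCS_sym hC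
      obtain ⟨y, hy, hyn⟩ := h D hD hsym ε hε
      rw [hDeq] at hy
      obtain ⟨a, ha, b, hb, hab⟩ := decomp hC hy
      by_cases hA : r - ε < ‖a‖
      · exact ⟨a, ha, hA⟩
      · push_neg at hA
        refine ⟨b, hb, ?_⟩
        have := norm_sub_le a b
        have h2 : ‖a - b‖ ≤ ‖a‖ + ‖b‖ := norm_sub_le a b
        linarith
end

section
/- Let $X$ be a Banach space, let $x \in S_X$ be a super $\Delta$-point, and let $W$ be a relatively weakly open subset of $B_X$ containing $x$. Then for every $\varepsilon > 0$ there exists a sequence $(x_n)$ in $W$ such that $\|x_i - x_j\| > 2 - \varepsilon$ for all $i \neq j$. In particular, $\alpha(W) = 2$. -/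
open Metric Set Pointwise Filter Topology

variable {X : Type*} [NormedAddCommGroup X] [NormedSpace ℝ X]

noncomputable def kuratowski {X : Type*} [NormedAddCommGroup X] (A : Set X) : ℝ :=
  sInf {ε : ℝ | 0 ≤ ε ∧ ∃ (n : ℕ) (c : Fin n → Set X),
    A ⊆ ⋃ i, c i ∧ ∀ i, EMetric.diam (c i) ≤ ENNReal.ofReal ε}

/-!
Shrinking `W` by the slices `{f > 1 - δ}` of finitely many functionals that are large at `x`
keeps a relatively weakly open neighbourhood of `x`, so the super Δ-property yields a point `y`
in it with `‖x - y‖ > 2 - δ`. A norming functional `g` of `x - y` then has `g x > 1 - δ` and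
`g y < -(1 - δ)`, so later points (which satisfy `g > 1 - δ`) are at distance `> 2 - 2δ` from `y`.
Iterating gives an infinite `(2 - 2δ)`-separated sequence in `W`; by pigeonhole `W` cannot be
covered by finitely many sets of diameter `< 2`, while `W ⊆ B_X` gives `α(W) ≤ 2`.
-/

section Kuratowski

variable {E : Type*} [NormedAddCommGroup E]

lemma kuratowski_le_of_cover {A : Set E} {ε : ℝ} (hε : 0 ≤ ε) {n : ℕ} (c : Fin n → Set E)
    (hA : A ⊆ ⋃ i, c i) (hc : ∀ i, ediam (c i) ≤ ENNReal.ofReal ε) :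
    kuratowski A ≤ ε :=
  csInf_le ⟨0, fun _ h => h.1⟩ ⟨hε, n, c, hA, hc⟩

lemma Bornology.IsBounded.ediam_le_ofReal_diam {A : Set E} (hA : Bornology.IsBounded A) :
    ediam A ≤ ENNReal.ofReal (diam A) :=
  (ENNReal.ofReal_toReal hA.ediam_ne_top).ge

lemma kuratowski_le_diam {A : Set E} (hA : Bornology.IsBounded A) : kuratowski A ≤ diam A :=
  kuratowski_le_of_cover diam_nonneg (fun _ : Fin 1 => A) (fun _ ha => mem_iUnion.2 ⟨0, ha⟩)
    fun _ => hA.ediam_le_ofReal_diam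

lemma lt_of_cover_of_separated {A : Set E} {ε r : ℝ} (hε : 0 ≤ ε) {n : ℕ} (c : Fin n → Set E)
    (hA : A ⊆ ⋃ i, c i) (hc : ∀ i, ediam (c i) ≤ ENNReal.ofReal ε) (u : ℕ → E)
    (hu : ∀ k, u k ∈ A) (hsep : ∀ i j, i ≠ j → r < ‖u i - u j‖) : r < ε := by
  choose φ hφ using fun k : Fin (n + 1) => mem_iUnion.1 (hA (hu k))
  obtain ⟨a, b, hab, hφab⟩ := Fintype.exists_ne_map_eq_of_card_lt φ (by simp)
  have hdist : edist (u a) (u b) ≤ ENNReal.ofReal ε :=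
    (edist_le_ediam_of_mem (hφ a) (hφab ▸ hφ b)).trans (hc (φ a))
  rw [edist_dist, ENNReal.ofReal_le_ofReal_iff hε, dist_eq_norm] at hdist
  exact (hsep a b (Fin.val_injective.ne hab)).trans_le hdist

lemma le_kuratowski_of_separated {A : Set E} {r : ℝ} (hA : Bornology.IsBounded A)
    (h : ∀ ε > 0, ∃ u : ℕ → E, (∀ k, u k ∈ A) ∧ ∀ i j, i ≠ j → r - ε < ‖u i - u j‖) :
    r ≤ kuratowski A := by
  refine le_csInf ⟨diam A, diam_nonneg, 1, fun _ => A, fun _ ha => mem_iUnion.2 ⟨0, ha⟩,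
    fun _ => hA.ediam_le_ofReal_diam⟩ ?_
  rintro ε ⟨hε, n, c, hAc, hc⟩
  refine le_of_forall_pos_lt_add fun η hη => ?_
  obtain ⟨u, hu, hsep⟩ := h η hη
  linarith [lt_of_cover_of_separated hε c hAc hc u hu hsep]

end Kuratowski

section SuperDelta

lemma isOpen_weakSpace_setOf_lt (f : X →L[ℝ] ℝ) (a : ℝ) :
    IsOpen (show Set (WeakSpace ℝ X) from {z | a < f z}) :=
  isOpen_lt continuous_const (WeakBilin.eval_continuous (topDualPairing ℝ X).flip f)

lemma RelWeakOpen.subset_closedBall {V : Set X} (hV : RelWeakOpen V) : V ⊆ closedBall 0 1 := by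
  obtain ⟨U, -, rfl⟩ := hV
  exact inter_subset_right

lemma RelWeakOpen.inter {V U : Set X} (hV : RelWeakOpen V)
    (hU : IsOpen (show Set (WeakSpace ℝ X) from U)) : RelWeakOpen (V ∩ U) := by
  obtain ⟨U', hU', rfl⟩ := hV
  exact ⟨U' ∩ U, hU'.inter hU, by rw [inter_right_comm]⟩

lemma exists_dual_lt_neg_of_two_sub_lt_norm_sub {x y : X} (hx : ‖x‖ ≤ 1) (hy : ‖y‖ ≤ 1)
    {δ : ℝ} (hxy : 2 - δ < ‖x - y‖) :
    ∃ g : X →L[ℝ] ℝ, ‖g‖ ≤ 1 ∧ g y < -(1 - δ) ∧ 1 - δ < g x := by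
  obtain ⟨g, hg, hgxy⟩ := exists_dual_vector'' ℝ (x - y)
  have hg_ball : ∀ z : X, ‖z‖ ≤ 1 → |g z| ≤ 1 := fun z hz =>
    (g.le_opNorm z).trans (mul_le_one₀ hg (norm_nonneg z) hz)
  have hgx : g x ≤ 1 := (le_abs_self _).trans (hg_ball x hx)
  have hgy : -1 ≤ g y := neg_le_of_abs_le (hg_ball y hy)
  have hgxy' : g x - g y = ‖x - y‖ := by simpa using hgxy
  exact ⟨g, hg, by linarith, by linarith⟩

lemma two_sub_two_mul_lt_norm_sub {g : X →L[ℝ] ℝ} (hg : ‖g‖ ≤ 1) {y z : X} {δ : ℝ}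
    (hy : g y < -(1 - δ)) (hz : 1 - δ < g z) : 2 - 2 * δ < ‖z - y‖ := by
  have : g (z - y) ≤ ‖z - y‖ :=
    (le_abs_self _).trans ((g.le_opNorm _).trans (mul_le_of_le_one_left (norm_nonneg _) hg))
  rw [map_sub] at this
  linarith

variable {x : X} {W : Set X}

lemma SuperDeltaPoint.exists_dual_lt_neg (h : SuperDeltaPoint x) (hW : RelWeakOpen W)
    (hxW : x ∈ W) {δ : ℝ} (hδ : 0 < δ) (s : Finset (X →L[ℝ] ℝ)) (hs : ∀ f ∈ s, 1 - δ < f x) :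
    ∃ y ∈ W, (∀ f ∈ s, 1 - δ < f y) ∧
      ∃ g : X →L[ℝ] ℝ, ‖g‖ ≤ 1 ∧ g y < -(1 - δ) ∧ 1 - δ < g x := by
  have hV : RelWeakOpen (W ∩ ⋂ f ∈ s, {z | 1 - δ < f z}) :=
    hW.inter (isOpen_biInter_finset fun f _ => isOpen_weakSpace_setOf_lt f _)
  obtain ⟨y, ⟨hyW, hys⟩, hxy⟩ := h _ hV ⟨hxW, mem_iInter₂.2 hs⟩ δ hδ
  have hball : ∀ z ∈ W, ‖z‖ ≤ 1 := fun z hz => by simpa using hW.subset_closedBall hz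
  exact ⟨y, hyW, mem_iInter₂.1 hys,
    exists_dual_lt_neg_of_two_sub_lt_norm_sub (hball x hxW) (hball y hyW) hxy⟩

lemma SuperDeltaPoint.exists_separated_seq (h : SuperDeltaPoint x) (hW : RelWeakOpen W)
    (hxW : x ∈ W) {δ : ℝ} (hδ : 0 < δ) :
    ∃ u : ℕ → X, (∀ n, u n ∈ W) ∧ ∀ i j, i ≠ j → 2 - 2 * δ < ‖u i - u j‖ := by
  classical
  -- each point carries the functional that was used to push it away from `x`
  obtain ⟨p, hp, hpr⟩ := exists_seq_of_forall_finset_exists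
    (fun q : X × (X →L[ℝ] ℝ) => q.1 ∈ W ∧ ‖q.2‖ ≤ 1 ∧ q.2 q.1 < -(1 - δ) ∧ 1 - δ < q.2 x)
    (fun q q' => 1 - δ < q.2 q'.1) fun s hs => by
      obtain ⟨y, hyW, hys, g, hg⟩ := h.exists_dual_lt_neg hW hxW hδ (s.image Prod.snd)
        (by simpa using fun f y hyf => (hs (y, f) hyf).2.2.2)
      exact ⟨(y, g), ⟨hyW, hg⟩, fun q hq => hys q.2 (Finset.mem_image_of_mem _ hq)⟩
  have hsep : ∀ i j, i < j → 2 - 2 * δ < ‖(p j).1 - (p i).1‖ := fun i j hij =>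
    two_sub_two_mul_lt_norm_sub (hp i).2.1 (hp i).2.2.1 (hpr i j hij)
  refine ⟨fun n => (p n).1, fun n => (hp n).1, fun i j hij => ?_⟩
  rcases hij.lt_or_gt with hlt | hgt
  · rw [norm_sub_rev]; exact hsep i j hlt
  · exact hsep j i hgt

end SuperDelta

theorem superDelta_separated_sequence_general {X : Type*} [NormedAddCommGroup X]
    [NormedSpace ℝ X] (x : X)
    (h : SuperDeltaPoint x) (W : Set X) (hW : RelWeakOpen W) (hxW : x ∈ W) :
    (∀ ε > 0, ∃ u : ℕ → X, (∀ n, u n ∈ W) ∧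
      ∀ i j : ℕ, i ≠ j → 2 - ε < ‖u i - u j‖) ∧
    kuratowski W = 2 := by
  have hsep : ∀ ε > 0, ∃ u : ℕ → X, (∀ n, u n ∈ W) ∧
      ∀ i j : ℕ, i ≠ j → 2 - ε < ‖u i - u j‖ := fun ε hε => by
    simpa [mul_div_cancel₀] using h.exists_separated_seq hW hxW (half_pos hε)
  have hWb : Bornology.IsBounded W := isBounded_closedBall.subset hW.subset_closedBall
  refine ⟨hsep, le_antisymm ?_ (le_kuratowski_of_separated hWb hsep)⟩
  calc kuratowski W ≤ diam W := kuratowski_le_diam hWb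
    _ ≤ diam (closedBall (0 : X) 1) := diam_mono hW.subset_closedBall isBounded_closedBall
    _ ≤ 2 := by simpa using diam_closedBall (x := (0 : X)) zero_le_one

theorem superDelta_separated_sequence {X : Type*} [NormedAddCommGroup X]
    [NormedSpace ℝ X] [CompleteSpace X] (x : X) (hx : ‖x‖ = 1)
    (h : SuperDeltaPoint x) (W : Set X) (hW : RelWeakOpen W) (hxW : x ∈ W) :
    (∀ ε > 0, ∃ u : ℕ → X, (∀ n, u n ∈ W) ∧
      ∀ i j : ℕ, i ≠ j → 2 - ε < ‖u i - u j‖) ∧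
    kuratowski W = 2 :=
  superDelta_separated_sequence_general x h W hW hxW
end
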